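/- arXiv:1401.3425 — 6 statements merged into one kernel-verified Lean document; each statement's English description precedes it below -/
import Mathlib

section
/- Let k be an arbitrary field, let A be a finitely generated k-algebra, let X = Spec(A), let φ: X → X be a morphism of affine k-schemes (given on points by φ(𝔭) = Φ⁻¹(𝔭) for a k-algebra homomorphism Φ: A → A), let α ∈ X be a point (a prime ideal of A, not necessarily closed), and let V = V(𝔞) be a Zariski-closed subset of X. If the set {n ∈ ℕ : φⁿ(α) ∈ V} contains no infinite arithmetic progression, then it has Banach density zero. -/
/-- A set `S ⊆ ℕ` has Banach density zero: for every `ε > 0` there exists `N` such that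
`|S ∩ I| ≤ ε·|I|` for every interval `I ⊆ ℕ` of length at least `N`. -/
def BanachDensityZero (S : Set ℕ) : Prop :=
  ∀ ε : ℝ, 0 < ε → ∃ N : ℕ, ∀ a n : ℕ, N ≤ n →
    (Nat.card ↥(S ∩ Set.Ico a (a + n)) : ℝ) ≤ ε * n

/-!
Noetherian induction on the closed set `V`. For `d ≥ 1` the return times of the orbit to
`V ∩ f^[-d] V` are exactly the `n` with `n, n + d` both return times to `V`. If this closed set
is all of `V`, then `f^[d]` maps `V` into itself and one visit to `V` yields a whole arithmetic
progression of visits. Otherwise it is strictly smaller, and by induction the pairs at every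
distance `d` have Banach density zero; a purely combinatorial argument then forces the return
times themselves to have Banach density zero: the return times without a successor within
distance `D` are `D`-separated, and those with one lie in finitely many sets of density zero.
-/

open Set

def ContainsArithProg (S : Set ℕ) : Prop :=
  ∃ a b : ℕ, 1 ≤ a ∧ {n : ℕ | ∃ ℓ : ℕ, n = a * ℓ + b} ⊆ S

theorem ContainsArithProg.mono {S T : Set ℕ} (hST : S ⊆ T) (hS : ContainsArithProg S) :
    ContainsArithProg T :=
  let ⟨a, b, ha, hsub⟩ := hS
  ⟨a, b, ha, hsub.trans hST⟩

theorem banachDensityZero_of_forall_eq_empty {S : Set ℕ} (hS : ∀ n, n ∉ S) :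
    BanachDensityZero S := by
  intro ε hε
  refine ⟨0, fun a n _ => ?_⟩
  rw [eq_empty_of_forall_notMem hS, empty_inter, Nat.card_of_isEmpty, Nat.cast_zero]
  positivity

theorem BanachDensityZero.union {S T : Set ℕ} (hS : BanachDensityZero S)
    (hT : BanachDensityZero T) : BanachDensityZero (S ∪ T) := by
  intro ε hε
  obtain ⟨NS, hNS⟩ := hS (ε / 2) (by positivity)
  obtain ⟨NT, hNT⟩ := hT (ε / 2) (by positivity)
  refine ⟨max NS NT, fun a n hn => ?_⟩
  have hcard := ncard_union_le (S ∩ Ico a (a + n)) (T ∩ Ico a (a + n))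
  rw [← union_inter_distrib_right] at hcard
  have hS' := hNS a n (le_of_max_le_left hn)
  have hT' := hNT a n (le_of_max_le_right hn)
  rw [Nat.card_coe_set_eq] at hS' hT' ⊢
  calc ((S ∪ T) ∩ Ico a (a + n)).ncard
      ≤ ((S ∩ Ico a (a + n)).ncard : ℝ) + (T ∩ Ico a (a + n)).ncard := by exact_mod_cast hcard
    _ ≤ ε / 2 * n + ε / 2 * n := add_le_add hS' hT'
    _ = ε * n := by ring

theorem BanachDensityZero.finset_biUnion {ι : Type*} (s : Finset ι) {S : ι → Set ℕ}
    (hS : ∀ i ∈ s, BanachDensityZero (S i)) : BanachDensityZero (⋃ i ∈ s, S i) := by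
  classical
  induction s using Finset.induction_on with
  | empty => simpa using banachDensityZero_of_forall_eq_empty (S := ∅) fun _ => id
  | insert i s _ ih =>
    rw [Finset.set_biUnion_insert]
    exact (hS i (s.mem_insert_self i)).union
      (ih fun j hj => hS j (Finset.mem_insert_of_mem hj))

theorem ncard_inter_Ico_le_of_separated {T : Set ℕ} {D : ℕ}
    (hT : ∀ s ∈ T, ∀ t ∈ T, s < t → s + D < t) (a n : ℕ) :
    (T ∩ Ico a (a + n)).ncard ≤ n / (D + 1) + 1 := by
  -- points in the same block of `D + 1` consecutive integers are too close to both lie in `T`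
  have hinj : InjOn (fun s => (s - a) / (D + 1)) (T ∩ Ico a (a + n)) := by
    suffices ∀ s ∈ T ∩ Ico a (a + n), ∀ t ∈ T ∩ Ico a (a + n), s < t →
        (s - a) / (D + 1) ≠ (t - a) / (D + 1) by
      intro s hs t ht hst
      by_contra hne
      rcases Nat.lt_or_gt_of_ne hne with hlt | hlt
      exacts [this s hs t ht hlt hst, this t ht s hs hlt hst.symm]
    intro s ⟨hsT, hsI⟩ t ⟨htT, htI⟩ hlt hblock
    have hs := Nat.div_add_mod (s - a) (D + 1)
    have ht := Nat.div_add_mod (t - a) (D + 1)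
    have hmod := Nat.mod_lt (t - a) (show 0 < D + 1 by omega)
    have := hT s hsT t htT hlt
    rw [hblock] at hs
    generalize (D + 1) * ((t - a) / (D + 1)) = q at hs ht
    simp only [mem_Ico] at hsI htI
    omega
  calc (T ∩ Ico a (a + n)).ncard ≤ (Iic (n / (D + 1))).ncard := by
        refine ncard_le_ncard_of_injOn _ (fun s ⟨_, hs⟩ => ?_) hinj (finite_Iic _)
        exact Nat.div_le_div_right (by simp only [mem_Ico] at hs; omega)
    _ = n / (D + 1) + 1 := ncard_Iic_nat _

theorem BanachDensityZero.of_forall_inter_shift {S : Set ℕ}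
    (h : ∀ d : ℕ, 1 ≤ d → BanachDensityZero {n : ℕ | n ∈ S ∧ n + d ∈ S}) :
    BanachDensityZero S := by
  intro ε hε
  set D : ℕ := ⌈4 / ε⌉₊
  have hD : 4 / ε ≤ D := Nat.le_ceil _
  set B : Set ℕ := ⋃ d ∈ Finset.Icc 1 D, {n : ℕ | n ∈ S ∧ n + d ∈ S}
  have hB : BanachDensityZero B :=
    BanachDensityZero.finset_biUnion _ fun d hd => h d (Finset.mem_Icc.mp hd).1
  have hsep : ∀ s ∈ S \ B, ∀ t ∈ S \ B, s < t → s + D < t := by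
    intro s ⟨_, hsB⟩ t ⟨htS, _⟩ hlt
    by_contra! hle
    refine hsB (mem_biUnion (x := t - s) (Finset.mem_Icc.mpr ⟨by omega, by omega⟩) ?_)
    exact ⟨‹_›, by rwa [Nat.add_sub_cancel' hlt.le]⟩
  obtain ⟨N, hN⟩ := hB (ε / 2) (by positivity)
  refine ⟨max N D, fun a n hn => ?_⟩
  have hnD : 4 / ε ≤ n := hD.trans (by exact_mod_cast le_of_max_le_right hn)
  have hsplit : S ∩ Ico a (a + n) ⊆ (S \ B) ∩ Ico a (a + n) ∪ B ∩ Ico a (a + n) := by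
    rw [← union_inter_distrib_right, sdiff_union_self]
    exact inter_subset_inter_left _ subset_union_left
  have hblocks : (n / (D + 1) : ℕ) ≤ ε * n / 4 := by
    calc ((n / (D + 1) : ℕ) : ℝ) ≤ n / (D + 1) := by exact_mod_cast Nat.cast_div_le
      _ ≤ n / (4 / ε) := by gcongr; linarith
      _ = ε * n / 4 := by field_simp
  have hone : (1 : ℝ) ≤ ε * n / 4 := by
    rw [div_le_iff₀ hε] at hnD
    linarith
  have hbad := hN a n (le_of_max_le_left hn)
  rw [Nat.card_coe_set_eq] at hbad ⊢
  have hcard := (ncard_le_ncard hsplit ((finite_Ico _ _).subset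
    (union_subset inter_subset_right inter_subset_right))).trans (ncard_union_le _ _)
  calc ((S ∩ Ico a (a + n)).ncard : ℝ)
      ≤ ((S \ B) ∩ Ico a (a + n)).ncard + (B ∩ Ico a (a + n)).ncard := by exact_mod_cast hcard
    _ ≤ ((n / (D + 1) + 1 : ℕ) : ℝ) + ε / 2 * n := by
        gcongr
        exact_mod_cast ncard_inter_Ico_le_of_separated hsep a n
    _ ≤ ε * n := by push_cast; linarith

section Dynamics

variable {X : Type*} {f : X → X}

theorem containsArithProg_of_mapsTo_iterate {V : Set X} {d : ℕ} (hd : 1 ≤ d)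
    (hV : MapsTo f^[d] V V) {x : X} {n₀ : ℕ} (hn₀ : f^[n₀] x ∈ V) :
    ContainsArithProg {n : ℕ | f^[n] x ∈ V} := by
  refine ⟨d, n₀, hd, ?_⟩
  rintro _ ⟨ℓ, rfl⟩
  rw [mem_ofPred_eq, Function.iterate_add_apply, Function.iterate_mul]
  exact hV.iterate ℓ hn₀

theorem iterate_mem_inter_preimage_iff (x : X) (V : Set X) (m d : ℕ) :
    f^[m] x ∈ V ∩ f^[d] ⁻¹' V ↔ f^[m] x ∈ V ∧ f^[m + d] x ∈ V := by
  rw [add_comm, Function.iterate_add_apply]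
  rfl

open TopologicalSpace in
theorem containsArithProg_or_banachDensityZero_iterate_mem [TopologicalSpace X]
    [NoetherianSpace X] (hf : Continuous f) (x : X) (V : Closeds X) :
    ContainsArithProg {n : ℕ | f^[n] x ∈ V} ∨ BanachDensityZero {n : ℕ | f^[n] x ∈ V} := by
  induction V using WellFoundedLT.induction with
  | _ V IH =>
  refine or_iff_not_imp_left.mpr fun hAP => .of_forall_inter_shift fun d hd => ?_
  set V' : Closeds X := V ⊓ V.preimage (hf.iterate d)
  have hV' : {n : ℕ | n ∈ {n | f^[n] x ∈ V} ∧ n + d ∈ {n | f^[n] x ∈ V}} =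
      {n : ℕ | f^[n] x ∈ V'} :=
    ext fun m => (iterate_mem_inter_preimage_iff x V m d).symm
  rw [hV']
  rcases (inf_le_left : V' ≤ V).lt_or_eq with hlt | (heq : V' = V)
  · exact (IH V' hlt).resolve_left fun hAP' =>
      hAP (hAP'.mono fun n hn => (inf_le_left : V' ≤ V) hn)
  · have hmaps : MapsTo f^[d] V V := fun y hy => by
      rw [← heq] at hy
      exact hy.2
    refine banachDensityZero_of_forall_eq_empty fun n hn => hAP ?_
    rw [mem_ofPred_eq, heq] at hn
    exact containsArithProg_of_mapsTo_iterate hd hmaps hn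

end Dynamics

theorem banach_density_zero_of_no_arithmetic_progression
    (k A : Type*) [Field k] [CommRing A] [Algebra k A] [Algebra.FiniteType k A]
    (Φ : A →ₐ[k] A) (α : PrimeSpectrum A) (𝔞 : Ideal A)
    (S : Set ℕ)
    (hS : S = {n : ℕ | (PrimeSpectrum.comap Φ.toRingHom)^[n] α ∈
      PrimeSpectrum.zeroLocus (𝔞 : Set A)})
    (hAP : ∀ a b : ℕ, 1 ≤ a → ¬ ({n : ℕ | ∃ ℓ : ℕ, n = a * ℓ + b} ⊆ S)) :
    BanachDensityZero S := by
  have : IsNoetherianRing A := Algebra.FiniteType.isNoetherianRing k A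
  subst hS
  exact (containsArithProg_or_banachDensityZero_iterate_mem
    (PrimeSpectrum.continuous_comap Φ.toRingHom) α
    ⟨_, PrimeSpectrum.isClosed_zeroLocus (𝔞 : Set A)⟩).resolve_left
    fun ⟨a, b, ha, hsub⟩ => hAP a b ha hsub
end

section
/- Let p be a prime number and let t be the variable in the field 𝔽_p(t) of rational functions over the finite field 𝔽_p with p elements. Then for n ∈ ℕ, the equation tⁿ + (1−t)ⁿ = 1 holds in 𝔽_p(t) if and only if n = p^ℓ for some ℓ ∈ ℕ. Equivalently, for the map φ: 𝔸² → 𝔸² over 𝔽_p(t) given by φ(x,y) = (tx, (1−t)y), the point α = (1,1), and the line V = {x + y = 1}, one has {n ∈ ℕ : φⁿ(α) ∈ V} = {p^ℓ : ℓ ≥ 0}. -/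
open Polynomial in

private lemma poly_key_charp (p : ℕ) [Fact p.Prime] (m : ℕ) (hm : ¬ p ∣ m)
    (h : (Polynomial.X : (ZMod p)[X])^m + (1 - Polynomial.X)^m = 1) : m = 1 := by
  have hm0 : m ≠ 0 := by rintro rfl; exact hm (dvd_zero p)
  have hd := congrArg Polynomial.derivative h
  simp [Polynomial.derivative_pow] at hd
  have hmz : ((m : ZMod p)) ≠ 0 := by
    simpa [ZMod.natCast_eq_zero_iff] using hm
  have hmz' : ((m : (ZMod p)[X])) ≠ 0 := by
    simpa [Polynomial.C_eq_natCast] using (Polynomial.C_ne_zero.mpr hmz)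
  have heq : (Polynomial.X : (ZMod p)[X]) ^ (m-1) = (1 - Polynomial.X) ^ (m-1) := by
    have : (m : (ZMod p)[X]) *
        ((Polynomial.X : (ZMod p)[X]) ^ (m-1) - (1 - Polynomial.X) ^ (m-1)) = 0 := by
      ring_nf; ring_nf at hd; linear_combination hd
    rcases mul_eq_zero.mp this with h1 | h1
    · exact absurd h1 hmz'
    · exact sub_eq_zero.mp h1
  have := congrArg (Polynomial.eval 0) heq
  simp at this
  rcases Nat.eq_zero_or_pos (m-1) with h2 | h2
  · omega
  · rw [zero_pow (by omega)] at this
    exact absurd this.symm one_ne_zero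

private lemma ratfunc_key_charp (p : ℕ) [Fact p.Prime] (n : ℕ) :
    (RatFunc.X : RatFunc (ZMod p)) ^ n + (1 - RatFunc.X) ^ n = 1 ↔
      ∃ ℓ : ℕ, n = p ^ ℓ := by
  have hp : p.Prime := Fact.out
  haveI : CharP (RatFunc (ZMod p)) p :=
    charP_of_injective_algebraMap (algebraMap (ZMod p) (RatFunc (ZMod p))).injective p
  constructor
  · intro h
    have hn0 : n ≠ 0 := by
      rintro rfl
      simp at h
    set ℓ := n.factorization p with hℓ
    set m := n / p ^ ℓ with hm
    have hnm : p ^ ℓ * m = n := Nat.ordProj_mul_ordCompl_eq_self n p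
    have hpm : ¬ p ∣ m := Nat.not_dvd_ordCompl hp hn0
    have hc : ((RatFunc.X : RatFunc (ZMod p)) ^ m + (1 - RatFunc.X) ^ m) ^ p ^ ℓ = 1 := by
      rw [add_pow_char_pow, ← pow_mul, ← pow_mul, mul_comm m (p ^ ℓ), hnm]
      exact h
    have hc1 : (RatFunc.X : RatFunc (ZMod p)) ^ m + (1 - RatFunc.X) ^ m = 1 := by
      have : ((RatFunc.X : RatFunc (ZMod p)) ^ m + (1 - RatFunc.X) ^ m - 1) ^ p ^ ℓ = 0 := by
        rw [sub_pow_char_pow, hc, one_pow, sub_self]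
      have := pow_eq_zero_iff (pow_ne_zero ℓ hp.ne_zero) |>.mp this
      exact sub_eq_zero.mp this
    -- transfer to polynomials
    have hpoly : (Polynomial.X : Polynomial (ZMod p))^m + (1 - Polynomial.X)^m = 1 := by
      apply RatFunc.algebraMap_injective (ZMod p)
      push_cast
      simpa [map_add, map_pow, map_sub, map_one, RatFunc.algebraMap_X] using hc1
    have := poly_key_charp p m hpm hpoly
    exact ⟨ℓ, by rw [this, mul_one] at hnm; exact hnm.symm⟩
  · rintro ⟨ℓ, rfl⟩
    rw [← add_pow_char_pow]
    simp

theorem charp_example_orbit_in_line (p : ℕ) [Fact p.Prime] :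
    (∀ n : ℕ, (RatFunc.X : RatFunc (ZMod p)) ^ n + (1 - RatFunc.X) ^ n = 1 ↔
      ∃ ℓ : ℕ, n = p ^ ℓ) ∧
    (∀ φ : RatFunc (ZMod p) × RatFunc (ZMod p) → RatFunc (ZMod p) × RatFunc (ZMod p),
      (∀ z, φ z = (RatFunc.X * z.1, (1 - RatFunc.X) * z.2)) →
      {n : ℕ | (φ^[n] (1, 1)).1 + (φ^[n] (1, 1)).2 = 1} = {n : ℕ | ∃ ℓ : ℕ, n = p ^ ℓ}) := by
  refine ⟨ratfunc_key_charp p, ?_⟩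
  intro φ hφ
  have hiter : ∀ n : ℕ, φ^[n] (1, 1) = (RatFunc.X ^ n, (1 - RatFunc.X) ^ n) := by
    intro n
    induction n with
    | zero => simp
    | succ n ih =>
      rw [Function.iterate_succ_apply', ih, hφ]
      simp [pow_succ, mul_comm]
  ext n
  simp only [Set.mem_setOf_eq, hiter]
  exact ratfunc_key_charp p n
end

section
/- Let A be a commutative ring and let [·]: A → ℝ be a function satisfying [fg] = [f]·[g] for all f, g ∈ A, 0 ≤ [f] ≤ 1 for all f ∈ A, [1] = 1, and the ordinary triangle inequality [f+g] ≤ [f] + [g] for all f, g ∈ A. Then [·] satisfies the ultrametric inequality: [f+g] ≤ max{[f], [g]} for all f, g ∈ A. -/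
/-!
Expanding `(f + g) ^ n` by the binomial theorem gives `n + 1` terms, each of size at most
`max [f] [g] ^ n` because binomial coefficients have size at most `1`. Hence
`[f + g] ^ n ≤ (n + 1) * max [f] [g] ^ n` for every `n`. If `[f + g]` exceeded `max [f] [g]`, the
left side would grow exponentially faster than the right.
-/

theorem le_of_forall_pow_le_succ_mul_pow {a b : ℝ} (hb : 0 ≤ b)
    (h : ∀ n : ℕ, a ^ n ≤ (n + 1) * b ^ n) : a ≤ b := by
  rcases hb.eq_or_lt with rfl | hb
  · simpa using h 1
  by_contra! hba
  obtain ⟨n, hn⟩ := Real.exists_natCast_add_one_lt_pow_of_one_lt ((one_lt_div hb).2 hba)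
  rw [div_pow, lt_div_iff₀ (by positivity)] at hn
  exact (h n).not_gt hn

namespace MonoidHom

variable {A : Type*} [CommSemiring A] (v : A →* ℝ)

theorem apply_add_pow_le_succ_mul_max_pow (hnonneg : ∀ f, 0 ≤ v f)
    (hnat : ∀ n : ℕ, v n ≤ 1) (hadd : ∀ f g, v (f + g) ≤ v f + v g) (f g : A) (n : ℕ) :
    v (f + g) ^ n ≤ (n + 1) * max (v f) (v g) ^ n := by
  set M := max (v f) (v g)
  have term_le (k : ℕ) (hk : k ≤ n) : v (f ^ k * g ^ (n - k) * n.choose k) ≤ M ^ n := by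
    rw [map_mul, map_mul, map_pow, map_pow]
    calc v f ^ k * v g ^ (n - k) * v (n.choose k) ≤ M ^ k * M ^ (n - k) * 1 := by
          bound [hnonneg f, hnonneg g, hnonneg (n.choose k : A), hnat (n.choose k)]
      _ = M ^ n := by rw [mul_one, ← pow_add, Nat.add_sub_cancel' hk]
  calc v (f + g) ^ n = v (∑ k ∈ Finset.range (n + 1), f ^ k * g ^ (n - k) * n.choose k) := by
        rw [← map_pow, add_pow]
    _ ≤ ∑ k ∈ Finset.range (n + 1), v (f ^ k * g ^ (n - k) * n.choose k) :=
        Finset.le_sum_nonempty_of_subadditive v hadd Finset.nonempty_range_add_one _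
    _ ≤ ∑ _k ∈ Finset.range (n + 1), M ^ n :=
        Finset.sum_le_sum fun k hk => term_le k (Finset.mem_range_succ_iff.1 hk)
    _ = (n + 1) * M ^ n := by simp

theorem apply_add_le_max (hnonneg : ∀ f, 0 ≤ v f) (hnat : ∀ n : ℕ, v n ≤ 1)
    (hadd : ∀ f g, v (f + g) ≤ v f + v g) (f g : A) : v (f + g) ≤ max (v f) (v g) :=
  le_of_forall_pow_le_succ_mul_pow (le_max_of_le_left (hnonneg f))
    (v.apply_add_pow_le_succ_mul_max_pow hnonneg hnat hadd f g)

end MonoidHom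

theorem ultrametric_of_triangle_inequality
    (A : Type*) [CommRing A] (v : A → ℝ)
    (hmul : ∀ f g : A, v (f * g) = v f * v g)
    (hnonneg : ∀ f : A, 0 ≤ v f)
    (hle_one : ∀ f : A, v f ≤ 1)
    (hone : v 1 = 1)
    (htri : ∀ f g : A, v (f + g) ≤ v f + v g) :
    ∀ f g : A, v (f + g) ≤ max (v f) (v g) :=
  MonoidHom.apply_add_le_max ⟨⟨v, hone⟩, hmul⟩ hnonneg (fun _ => hle_one _) htri
end

section
/- Let k be a field and let A be a nonzero k-algebra. The Berkovich spectrum ℳ(A), i.e., the set of all bounded multiplicative seminorms on A regarded as a subset of the product space ℝ^A with the product (pointwise-convergence) topology, is a nonempty compact Hausdorff space. -/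
/-- A bounded multiplicative seminorm on a `k`-algebra `A`. -/
def IsBddMultSeminorm (k : Type*) {A : Type*} [Field k] [CommRing A] [Algebra k A]
    (v : A → ℝ) : Prop :=
  (∀ f : A, 0 ≤ v f) ∧ (∀ f : A, v f ≤ 1) ∧
  (∀ c : k, c ≠ 0 → v (algebraMap k A c) = 1) ∧ (v 0 = 0) ∧
  (∀ f g : A, v (f + g) ≤ max (v f) (v g)) ∧
  (∀ f g : A, v (f * g) = v f * v g)

theorem berkovich_spectrum_nonempty_compact_hausdorff
    (k A : Type*) [Field k] [CommRing A] [Algebra k A] [Nontrivial A] :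
    ({v : A → ℝ | IsBddMultSeminorm k v}).Nonempty ∧
    IsCompact {v : A → ℝ | IsBddMultSeminorm k v} ∧
    T2Space ↥{v : A → ℝ | IsBddMultSeminorm k v} := by
  classical
  obtain ⟨m, hm⟩ := Ideal.exists_maximal A
  haveI hp : m.IsPrime := hm.isPrime
  refine ⟨⟨fun f => if f ∈ m then 0 else 1, ?_⟩, ?_, inferInstance⟩
  · refine ⟨fun f => ?_, fun f => ?_, fun c hc => ?_, ?_, fun f g => ?_, fun f g => ?_⟩
    · dsimp only; split <;> norm_num
    · dsimp only; split <;> norm_num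
    · have hmem : algebraMap k A c ∉ m := by
        intro h
        have h1 : (1 : A) ∈ m := by
          have := m.mul_mem_left (algebraMap k A c⁻¹) h
          rwa [← map_mul, inv_mul_cancel₀ hc, map_one] at this
        exact hm.ne_top ((Ideal.eq_top_iff_one m).mpr h1)
      simp [hmem]
    · simp [m.zero_mem]
    · by_cases hf : f ∈ m <;> by_cases hg : g ∈ m
      · simp [hf, hg, m.add_mem hf hg]
      · simp only [hf, hg, if_true, if_false]
        split <;> norm_num
      · simp only [hf, hg, if_true, if_false]
        split <;> norm_num
      · simp only [hf, hg, if_false]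
        split <;> norm_num
    · have hmul : f * g ∈ m ↔ f ∈ m ∨ g ∈ m := hp.mul_mem_iff_mem_or_mem
      by_cases hf : f ∈ m <;> by_cases hg : g ∈ m <;>
        simp [hf, hg, hmul.mpr, hmul]
  · have hclosed : IsClosed {v : A → ℝ | IsBddMultSeminorm k v} := by
      have heq : {v : A → ℝ | IsBddMultSeminorm k v} =
          (⋂ f : A, {v : A → ℝ | 0 ≤ v f}) ∩ (⋂ f : A, {v : A → ℝ | v f ≤ 1}) ∩
          (⋂ c : {c : k // c ≠ 0}, {v : A → ℝ | v (algebraMap k A c.1) = 1}) ∩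
          {v : A → ℝ | v 0 = 0} ∩
          (⋂ f : A, ⋂ g : A, {v : A → ℝ | v (f + g) ≤ max (v f) (v g)}) ∩
          (⋂ f : A, ⋂ g : A, {v : A → ℝ | v (f * g) = v f * v g}) := by
        ext v
        simp only [Set.mem_inter_iff, Set.mem_iInter, Set.mem_setOf_eq, IsBddMultSeminorm,
          Subtype.forall]
        tauto
      have h1 : IsClosed (⋂ f : A, {v : A → ℝ | 0 ≤ v f}) :=
        isClosed_iInter fun f => isClosed_le continuous_const (continuous_apply f)
      have h2 : IsClosed (⋂ f : A, {v : A → ℝ | v f ≤ 1}) :=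
        isClosed_iInter fun f => isClosed_le (continuous_apply f) continuous_const
      have h3 : IsClosed (⋂ c : {c : k // c ≠ 0}, {v : A → ℝ | v (algebraMap k A c.1) = 1}) :=
        isClosed_iInter fun c => isClosed_eq (continuous_apply _) continuous_const
      have h4 : IsClosed {v : A → ℝ | v 0 = 0} :=
        isClosed_eq (continuous_apply 0) continuous_const
      have h5 : IsClosed (⋂ f : A, ⋂ g : A, {v : A → ℝ | v (f + g) ≤ max (v f) (v g)}) :=
        isClosed_iInter fun f => isClosed_iInter fun g =>
          isClosed_le (continuous_apply _) ((continuous_apply f).max (continuous_apply g))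
      have h6 : IsClosed (⋂ f : A, ⋂ g : A, {v : A → ℝ | v (f * g) = v f * v g}) :=
        isClosed_iInter fun f => isClosed_iInter fun g =>
          isClosed_eq (continuous_apply _) ((continuous_apply f).mul (continuous_apply g))
      rw [heq]
      exact ((((h1.inter h2).inter h3).inter h4).inter h5).inter h6
    have hcompact : IsCompact (Set.pi Set.univ fun _ : A => Set.Icc (0:ℝ) 1) :=
      isCompact_univ_pi fun _ => isCompact_Icc
    refine hcompact.of_isClosed_subset hclosed fun v hv => ?_
    intro f _
    exact ⟨hv.1 f, hv.2.1 f⟩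
end

section
/- Let k be a field, let A be a Noetherian k-algebra, and let 𝔞 be an ideal of A. Then the preimage under the reduction map π: ℳ(A) → Spec(A) of the Zariski-closed set V(𝔞) = {𝔭 : 𝔞 ⊆ 𝔭} is an open subset of ℳ(A); that is, the set {ζ ∈ ℳ(A) : [f]_ζ < 1 for all f ∈ 𝔞} is open in ℳ(A). Consequently π is anti-continuous: the inverse image of every Zariski-closed (resp. Zariski-open) subset of Spec(A) is open (resp. closed) in ℳ(A). -/
theorem reduction_map_anticontinuous
    (k A : Type*) [Field k] [CommRing A] [Algebra k A] [IsNoetherianRing A]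
    (π : ↥{v : A → ℝ | IsBddMultSeminorm k v} → PrimeSpectrum A)
    (hπ : ∀ ζ, ((π ζ).asIdeal : Set A) = {f : A | ζ.1 f < 1}) :
    (∀ 𝔞 : Ideal A, IsOpen {ζ : ↥{v : A → ℝ | IsBddMultSeminorm k v} | ∀ f ∈ 𝔞, ζ.1 f < 1}) ∧
    (∀ 𝔞 : Ideal A, IsOpen (π ⁻¹' PrimeSpectrum.zeroLocus (𝔞 : Set A))) ∧
    (∀ C : Set (PrimeSpectrum A), IsClosed C → IsOpen (π ⁻¹' C)) ∧
    (∀ U : Set (PrimeSpectrum A), IsOpen U → IsClosed (π ⁻¹' U)) := by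
  have key : ∀ 𝔞 : Ideal A,
      IsOpen {ζ : ↥{v : A → ℝ | IsBddMultSeminorm k v} | ∀ f ∈ 𝔞, ζ.1 f < 1} := by
    intro 𝔞
    obtain ⟨s, hs⟩ := (IsNoetherian.noetherian 𝔞 : 𝔞.FG)
    have hset : {ζ : ↥{v : A → ℝ | IsBddMultSeminorm k v} | ∀ f ∈ 𝔞, ζ.1 f < 1}
        = ⋂ g ∈ s, {ζ : ↥{v : A → ℝ | IsBddMultSeminorm k v} | ζ.1 g < 1} := by
      ext ζ
      simp only [Set.mem_setOf_eq, Set.mem_iInter]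
      constructor
      · intro h g hg
        exact h g (hs ▸ Ideal.subset_span hg)
      · intro h f hf
        obtain ⟨hnn, hle, -, hzero, hadd, hmul⟩ := ζ.2
        rw [← hs] at hf
        refine Submodule.span_induction (p := fun f _ => ζ.1 f < 1) ?_ ?_ ?_ ?_ hf
        · exact fun g hg => h g hg
        · simpa [hzero] using (zero_lt_one : (0:ℝ) < 1)
        · intro x y _ _ hx hy
          exact lt_of_le_of_lt (hadd x y) (max_lt hx hy)
        · intro a x _ hx
          have : ζ.1 (a • x) = ζ.1 a * ζ.1 x := by
            simpa [smul_eq_mul] using hmul a x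
          rw [this]
          calc ζ.1 a * ζ.1 x ≤ 1 * ζ.1 x :=
                mul_le_mul_of_nonneg_right (hle a) (hnn x)
            _ = ζ.1 x := one_mul _
            _ < 1 := hx
    rw [hset]
    refine isOpen_biInter_finset fun g _ => ?_
    have hc : Continuous fun ζ : ↥{v : A → ℝ | IsBddMultSeminorm k v} => ζ.1 g :=
      (continuous_apply g).comp continuous_subtype_val
    exact isOpen_lt hc continuous_const
  have key2 : ∀ 𝔞 : Ideal A, IsOpen (π ⁻¹' PrimeSpectrum.zeroLocus (𝔞 : Set A)) := by
    intro 𝔞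
    have : π ⁻¹' PrimeSpectrum.zeroLocus (𝔞 : Set A)
        = {ζ | ∀ f ∈ 𝔞, ζ.1 f < 1} := by
      ext ζ
      simp only [Set.mem_preimage, PrimeSpectrum.mem_zeroLocus, Set.mem_setOf_eq]
      constructor
      · intro h f hf
        have := h hf
        rw [show ((π ζ).asIdeal : Set A) = {f : A | ζ.1 f < 1} from hπ ζ] at this
        exact this
      · intro h f hf
        show f ∈ ((π ζ).asIdeal : Set A)
        rw [hπ ζ]
        exact h f hf
    rw [this]
    exact key 𝔞
  have key3 : ∀ C : Set (PrimeSpectrum A), IsClosed C → IsOpen (π ⁻¹' C) := by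
    intro C hC
    obtain ⟨s, rfl⟩ := (PrimeSpectrum.isClosed_iff_zeroLocus C).mp hC
    rw [← PrimeSpectrum.zeroLocus_span]
    exact key2 (Ideal.span s)
  exact ⟨key, key2, key3, fun U hU => by
    have := key3 Uᶜ (isClosed_compl_iff.mpr hU)
    rw [Set.preimage_compl] at this
    simpa using this.isClosed_compl⟩
end

section
/- Let k be a field, let A be a k-algebra, and let 𝔞 be an ideal of A. Then the image under the trivial map triv: Spec(A) → ℳ(A) of the Zariski-closed set V(𝔞) = {𝔭 : 𝔞 ⊆ 𝔭} is a closed subset of ℳ(A); that is, the trivial map is a closed map from Spec(A) with the Zariski topology to ℳ(A). -/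
open scoped Classical

theorem trivial_map_is_closed
    (k A : Type*) [Field k] [CommRing A] [Algebra k A]
    (triv : PrimeSpectrum A → ↥{v : A → ℝ | IsBddMultSeminorm k v})
    (htriv : ∀ 𝔭 (f : A), (triv 𝔭).1 f = if f ∈ 𝔭.asIdeal then (0 : ℝ) else 1) :
    (∀ 𝔞 : Ideal A, IsClosed (triv '' PrimeSpectrum.zeroLocus (𝔞 : Set A))) ∧
    IsClosedMap triv := by
  have key : ∀ 𝔞 : Ideal A, IsClosed (triv '' PrimeSpectrum.zeroLocus (𝔞 : Set A)) := by
    intro 𝔞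
    have heq : triv '' PrimeSpectrum.zeroLocus (𝔞 : Set A) =
        Subtype.val ⁻¹' ((⋂ f ∈ (𝔞 : Set A), {v : A → ℝ | v f = 0}) ∩
          ⋂ f : A, {v : A → ℝ | v f = 0 ∨ v f = 1}) := by
      ext x
      simp only [Set.mem_preimage, Set.mem_inter_iff, Set.mem_iInter, Set.mem_setOf_eq]
      constructor
      · rintro ⟨𝔭, h𝔭, rfl⟩
        refine ⟨fun f hf => ?_, fun f => ?_⟩
        · rw [htriv]; exact if_pos ((PrimeSpectrum.mem_zeroLocus _ _).mp h𝔭 hf)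
        · rw [htriv]; split <;> simp
      · rintro ⟨h1, h2⟩
        obtain ⟨hpos, hle, halg, hzero, hadd, hmul⟩ := x.2
        have hv1 : x.1 1 = 1 := by simpa using halg 1 one_ne_zero
        let P : Ideal A :=
          { carrier := {f | x.1 f = 0}
            add_mem' := by
              intro a b ha hb
              simp only [Set.mem_setOf_eq] at ha hb ⊢
              have := hadd a b
              rw [ha, hb] at this
              simpa using le_antisymm (by simpa using this) (hpos (a + b))
            zero_mem' := hzero
            smul_mem' := by
              intro c y hy
              simp only [Set.mem_setOf_eq, smul_eq_mul] at hy ⊢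
              rw [hmul, hy, mul_zero] }
        have hPmem : ∀ f, f ∈ P ↔ x.1 f = 0 := fun f => Iff.rfl
        have hprime : P.IsPrime := by
          constructor
          · intro h
            have : (1 : A) ∈ P := by rw [h]; trivial
            rw [hPmem] at this
            rw [hv1] at this; norm_num at this
          · intro a b hab
            rw [hPmem] at hab
            rw [hmul] at hab
            rcases mul_eq_zero.mp hab with h | h
            · exact Or.inl h
            · exact Or.inr h
        refine ⟨⟨P, hprime⟩, ?_, ?_⟩
        · intro f hf
          exact h1 f hf
        · apply Subtype.ext
          funext f
          rw [htriv]
          split_ifs with h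
          · exact ((hPmem f).mp h).symm
          · rcases h2 f with h0 | h1'
            · exact absurd ((hPmem f).mpr h0) h
            · exact h1'.symm
    rw [heq]
    apply IsClosed.preimage continuous_subtype_val
    apply IsClosed.inter
    · apply isClosed_biInter
      intro f _
      exact isClosed_singleton.preimage (continuous_apply f)
    · apply isClosed_iInter
      intro f
      have : {v : A → ℝ | v f = 0 ∨ v f = 1} =
          (fun v : A → ℝ => v f) ⁻¹' ({0} ∪ {1}) := by
        ext v; simp [or_comm]
      rw [this]
      exact (isClosed_singleton.union isClosed_singleton).preimage (continuous_apply f)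
  refine ⟨key, ?_⟩
  intro C hC
  obtain ⟨I, rfl⟩ := (PrimeSpectrum.isClosed_iff_zeroLocus_ideal C).mp hC
  exact key I
end
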